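/- arXiv:1804.09875 — 5 statements merged into one kernel-verified Lean document; each statement's English description precedes it below -/
import Mathlib

section
/- Suppose the distinct complex numbers p_1,…,p_n (pairwise distinct) and q_1,…,q_n (pairwise distinct), with {p_j} ∩ {q_j} = ∅, satisfy the vortex system: for each α, Σ_{j≠α} 1/(p_α−p_j) − Σ_j 1/(p_α−q_j) = μ and Σ_{j≠α} 1/(q_α−q_j) − Σ_j 1/(q_α−p_j) = −μ. Define the generating polynomials P(z) = Π_j (z−p_j), Q(z) = Π_j (z−q_j). Then P''Q − 2P'Q' + PQ'' = 2μ(P'Q − PQ'). -/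
/-!
The polynomial F = P''Q − 2P'Q' + PQ'' − 2μ(P'Q − PQ') has degree < 2n and vanishes at all 2n
distinct vortex positions, hence F = 0. At a = p_α write P = (z − a)R; then P'(a) = R(a) and
P''(a) = 2R'(a), so F(a) = 2R(a)Q(a)(R'(a)/R(a) − Q'(a)/Q(a) − μ), and by the logarithmic
derivative of a product the bracket is the α-th vortex equation. Exchanging P and Q turns μ into −μ.
-/

open Polynomial Finset

namespace Polynomial

variable {K : Type*} [Field K]

noncomputable def tkachenko (μ : K) (P Q : K[X]) : K[X] :=
  derivative (derivative P) * Q - 2 * derivative P * derivative Q + P * derivative (derivative Q)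
    - C (2 * μ) * (derivative P * Q - P * derivative Q)

theorem tkachenko_neg_comm (μ : K) (P Q : K[X]) : tkachenko (-μ) Q P = tkachenko μ P Q := by
  simp only [tkachenko, mul_neg, map_neg]
  ring

theorem natDegree_tkachenko_lt {n : ℕ} (hn : 0 < n) (μ : K) {P Q : K[X]}
    (hP : P.natDegree ≤ n) (hQ : Q.natDegree ≤ n) : (tkachenko μ P Q).natDegree < 2 * n := by
  have hP' := (natDegree_derivative_le P).trans (Nat.sub_le_sub_right hP 1)
  have hQ' := (natDegree_derivative_le Q).trans (Nat.sub_le_sub_right hQ 1)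
  have hP'' := (natDegree_derivative_le (derivative P)).trans (Nat.sub_le _ 1) |>.trans hP'
  have hQ'' := (natDegree_derivative_le (derivative Q)).trans (Nat.sub_le _ 1) |>.trans hQ'
  have h2 : (2 : K[X]).natDegree ≤ 0 := (natDegree_ofNat 2).le
  refine lt_of_le_of_lt ?_ (show 2 * n - 1 < 2 * n by omega)
  refine (natDegree_sub_le _ _).trans (max_le ((natDegree_add_le _ _).trans (max_le
    ((natDegree_sub_le _ _).trans (max_le ?_ ?_)) ?_)) ((natDegree_C_mul_le _ _).trans
    ((natDegree_sub_le _ _).trans (max_le ?_ ?_))))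
  · exact (natDegree_mul_le_of_le hP'' hQ).trans (by omega)
  · exact (natDegree_mul_le_of_le (natDegree_mul_le_of_le h2 hP') hQ').trans (by omega)
  · exact (natDegree_mul_le_of_le hP hQ'').trans (by omega)
  · exact (natDegree_mul_le_of_le hP' hQ).trans (by omega)
  · exact (natDegree_mul_le_of_le hP hQ').trans (by omega)

theorem eval_derivative_prod_X_sub_C {ι : Type*} (s : Finset ι) (r : ι → K)
    {a : K} (ha : ∀ j ∈ s, a ≠ r j) :
    eval a (derivative (∏ j ∈ s, (X - C (r j))))
      = (∑ j ∈ s, 1 / (a - r j)) * eval a (∏ j ∈ s, (X - C (r j))) := by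
  classical
  simp only [derivative_prod_finset, derivative_sub, derivative_X, derivative_C, sub_zero, mul_one,
    eval_finsetSum, eval_prod, eval_sub, eval_X, eval_C, sum_mul]
  refine sum_congr rfl fun j hj => ?_
  rw [← mul_prod_erase s _ hj, one_div, inv_mul_cancel_left₀ (sub_ne_zero.2 (ha j hj))]

theorem eval_tkachenko_X_sub_C_mul (μ a : K) (R Q : K[X]) :
    eval a (tkachenko μ ((X - C a) * R) Q)
      = 2 * (eval a (derivative R) * eval a Q - eval a R * eval a (derivative Q)
          - μ * eval a R * eval a Q) := by
  simp only [tkachenko, derivative_mul, derivative_add, derivative_sub, derivative_X,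
    derivative_C, sub_zero, one_mul, zero_mul, eval_sub, eval_add, eval_mul, eval_X, eval_C,
    sub_self, eval_ofNat]
  ring

theorem eval_tkachenko_prod_X_sub_C_eq_zero {ι κ : Type*} [Fintype ι] [DecidableEq ι] [Fintype κ]
    (μ : K) {p : ι → K} (q : κ → K) (hp : Function.Injective p) {α : ι} (hpq : ∀ j, p α ≠ q j)
    (h : ∑ j ∈ univ.erase α, 1 / (p α - p j) - ∑ j, 1 / (p α - q j) = μ) :
    eval (p α) (tkachenko μ (∏ j, (X - C (p j))) (∏ j, (X - C (q j)))) = 0 := by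
  rw [← mul_prod_erase univ _ (mem_univ α), eval_tkachenko_X_sub_C_mul,
    eval_derivative_prod_X_sub_C _ _ fun j hj => hp.ne (ne_of_mem_erase hj).symm,
    eval_derivative_prod_X_sub_C _ _ fun j _ => hpq j, ← h]
  ring

end Polynomial

/-- If the distinct vortex positions p, q satisfy the system (trans), then the
generating polynomials P = Π(z−p_j), Q = Π(z−q_j) satisfy the generalized
Tkachenko equation P''Q − 2P'Q' + PQ'' = 2μ(P'Q − PQ'). -/
theorem generating_polys_satisfy_tkachenko {n : ℕ} (μ : ℂ)
    (p q : Fin n → ℂ)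
    (hp : Function.Injective p) (hq : Function.Injective q)
    (hpq : ∀ i j, p i ≠ q j)
    (h1 : ∀ α : Fin n,
      (∑ j ∈ Finset.univ.erase α, 1 / (p α - p j)) - (∑ j, 1 / (p α - q j)) = μ)
    (h2 : ∀ α : Fin n,
      (∑ j ∈ Finset.univ.erase α, 1 / (q α - q j)) - (∑ j, 1 / (q α - p j)) = -μ) :
    let P : Polynomial ℂ := ∏ j, (X - C (p j))
    let Q : Polynomial ℂ := ∏ j, (X - C (q j))
    derivative (derivative P) * Q - 2 * derivative P * derivative Q
        + P * derivative (derivative Q)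
      = C (2 * μ) * (derivative P * Q - P * derivative Q) := by
  intro P Q
  rcases Nat.eq_zero_or_pos n with rfl | hn
  · simp [P, Q]
  suffices tkachenko μ P Q = 0 from sub_eq_zero.mp this
  refine eq_zero_of_natDegree_lt_card_of_eval_eq_zero _ (hp.sumElim hq hpq) ?_ ?_
  · rintro (i | i)
    · exact eval_tkachenko_prod_X_sub_C_eq_zero μ q hp (hpq i) (h1 i)
    · rw [← tkachenko_neg_comm]
      exact eval_tkachenko_prod_X_sub_C_eq_zero (-μ) p hq (fun j => (hpq j i).symm) (h2 i)
  · rw [Fintype.card_sum, Fintype.card_fin, ← two_mul]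
    exact natDegree_tkachenko_lt hn μ (by simp [P]) (by simp [Q])
end

section
/- Let P and Q be polynomials over ℂ satisfying P''Q − 2P'Q' + PQ'' = 2μ(P'Q − PQ') for some constant μ. If ξ ∈ ℂ satisfies P(ξ) = 0 and Q(ξ) ≠ 0, then ξ is a simple root of P (its multiplicity as a root of P is 1). -/
open Polynomial

/-- If P''Q − 2P'Q' + PQ'' = 2μ(P'Q − PQ'), P(ξ) = 0 and Q(ξ) ≠ 0,
then ξ is a simple root of P. -/
theorem simple_root_of_tkachenko (P Q : Polynomial ℂ) (μ ξ : ℂ) (hP0 : P ≠ 0)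
    (h : derivative (derivative P) * Q - 2 * derivative P * derivative Q
          + P * derivative (derivative Q)
        = C (2 * μ) * (derivative P * Q - P * derivative Q))
    (hP : P.eval ξ = 0) (hQ : Q.eval ξ ≠ 0) :
    rootMultiplicity ξ P = 1 := by
  set m := rootMultiplicity ξ P with hm
  have hm1 : 1 ≤ m := (rootMultiplicity_pos hP0).mpr hP
  by_contra hne
  obtain ⟨k, hk⟩ : ∃ k, m = k + 2 := ⟨m - 2, by omega⟩
  set D : Polynomial ℂ := X - C ξ with hD
  set R : Polynomial ℂ := P /ₘ D ^ m with hR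
  have hRne : R.eval ξ ≠ 0 := eval_divByMonic_pow_rootMultiplicity_ne_zero ξ hP0
  have hPfac : P = D ^ (k + 2) * R := by
    rw [← hk]; exact (pow_mul_divByMonic_rootMultiplicity_eq P ξ).symm
  have hDd : derivative D = 1 := by simp [hD]
  have hd1 : derivative (D ^ (k + 2)) = C ((k : ℂ) + 2) * D ^ (k + 1) := by
    rw [derivative_pow, hDd]
    push_cast
    ring
  have hd2 : derivative (D ^ (k + 1)) = C ((k : ℂ) + 1) * D ^ k := by
    rw [derivative_pow, hDd]
    push_cast
    ring
  rw [hPfac] at h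
  simp only [derivative_mul, derivative_add, derivative_C, hd1, hd2, zero_mul, zero_add] at h
  have hC2 : (C (2 * μ) : Polynomial ℂ) = 2 * C μ := by
    rw [C_mul, map_ofNat]
  rw [hC2] at h
  have hkey : D ^ k * (C (((k : ℂ) + 2) * ((k : ℂ) + 1)) * R * Q
        + D * ((2 * C ((k : ℂ) + 2) * derivative R + D * derivative (derivative R)) * Q
            - 2 * (C ((k : ℂ) + 2) * R + D * derivative R) * derivative Q
            + D * R * derivative (derivative Q)))
      = D ^ k * (D * (2 * C μ * ((C ((k : ℂ) + 2) * R + D * derivative R) * Q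
            - D * R * derivative Q))) := by
    rw [C_mul]
    linear_combination h
  have hcancel := mul_left_cancel₀ (pow_ne_zero k (X_sub_C_ne_zero ξ)) hkey
  have := congrArg (eval ξ) hcancel
  simp only [hD, eval_mul, eval_add, eval_sub, eval_C, eval_X, sub_self, zero_mul,
    mul_zero, add_zero, zero_add] at this
  exact hRne (by
    have ha : ((k : ℂ) + 2) ≠ 0 := by
      have : ((k + 2 : ℕ) : ℂ) ≠ 0 := Nat.cast_ne_zero.mpr (by omega)
      push_cast at this; exact this
    have hb : ((k : ℂ) + 1) ≠ 0 := by
      have : ((k + 1 : ℕ) : ℂ) ≠ 0 := Nat.cast_ne_zero.mpr (by omega)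
      push_cast at this; exact this
    have hne2 : ((k : ℂ) + 2) * ((k : ℂ) + 1) ≠ 0 := mul_ne_zero ha hb
    rcases mul_eq_zero.mp this with h1 | h1
    · rcases mul_eq_zero.mp h1 with h2 | h2
      · exact absurd h2 hne2
      · exact h2
    · exact absurd h1 hQ)
end

section
/- Let P and Q be polynomials over ℂ satisfying P''Q − 2P'Q' + PQ'' = 0. If ξ ∈ ℂ satisfies P(ξ) = 0 and Q(ξ) ≠ 0, then ξ is a simple root of P. -/
open Polynomial

/-- If P''Q − 2P'Q' + PQ'' = 0, P(ξ) = 0 and Q(ξ) ≠ 0, then ξ is a simple root of P. -/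
theorem simple_root_of_bilinear (P Q : Polynomial ℂ) (ξ : ℂ) (hP0 : P ≠ 0)
    (h : derivative (derivative P) * Q - 2 * derivative P * derivative Q
          + P * derivative (derivative Q) = 0)
    (hP : P.eval ξ = 0) (hQ : Q.eval ξ ≠ 0) :
    rootMultiplicity ξ P = 1 := by
  set m := rootMultiplicity ξ P with hm
  have hQ0 : Q ≠ 0 := fun hq => hQ (by simp [hq])
  have hm1 : 1 ≤ m := (rootMultiplicity_pos hP0).mpr hP
  by_contra hne
  have h2 : 2 ≤ m := by omega
  -- P' ≠ 0
  have hP'0 : derivative P ≠ 0 := by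
    intro hd
    have hc := Polynomial.eq_C_of_derivative_eq_zero hd
    apply hP0
    rw [hc] at hP ⊢
    simp at hP
    simp [hP]
  have hmult' : rootMultiplicity ξ (derivative P) = m - 1 :=
    derivative_rootMultiplicity_of_root hP
  have hP'root : (derivative P).IsRoot ξ :=
    (rootMultiplicity_pos hP'0).mp (by omega)
  have hP''0 : derivative (derivative P) ≠ 0 := by
    intro hd
    have hc := Polynomial.eq_C_of_derivative_eq_zero hd
    apply hP'0
    rw [hc] at hP'root ⊢
    simp [IsRoot] at hP'root
    simp [hP'root]
  have hmult'' : rootMultiplicity ξ (derivative (derivative P)) = m - 2 := by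
    rw [derivative_rootMultiplicity_of_root hP'root, hmult']; omega
  -- divisibility
  have hdvdP : (X - C ξ) ^ (m - 1) ∣ P :=
    dvd_trans (pow_dvd_pow _ (by omega)) (pow_rootMultiplicity_dvd P ξ)
  have hdvdP' : (X - C ξ) ^ (m - 1) ∣ derivative P := by
    rw [← hmult']; exact pow_rootMultiplicity_dvd _ ξ
  have heq : derivative (derivative P) * Q
      = 2 * derivative P * derivative Q - P * derivative (derivative Q) := by
    linear_combination h
  have hdvd : (X - C ξ) ^ (m - 1) ∣ derivative (derivative P) * Q := by
    rw [heq]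
    exact dvd_sub (by rw [mul_assoc]; exact Dvd.dvd.mul_left (hdvdP'.mul_right _) 2) (hdvdP.mul_right _)
  have hne0 : derivative (derivative P) * Q ≠ 0 := mul_ne_zero hP''0 hQ0
  have hle := (le_rootMultiplicity_iff hne0).mpr hdvd
  rw [rootMultiplicity_mul (by exact hne0), hmult'',
    rootMultiplicity_eq_zero (by simpa [IsRoot] using hQ)] at hle
  omega
end

section
/- Let μ ≠ 0. The generating functions of θ_n(z;K) and θ_n(z−μ^{−1}; K̃), where K̃ = (k_2+μ^{−3}, k_3+μ^{−5}, …), are related by Σ_{n≥0} θ_n(z;K)λⁿ = sqrt((1+μ^{−1}λ)/(1−μ^{−1}λ)) · Σ_{n≥0} θ_n(z−μ^{−1};K̃)λⁿ, as formal power series in λ. -/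
/-!
Both sides are solutions of the linear differential equation `F' = (z − Σ_{j≥2} k_j λ^{2j−2}) F`
in `ℂ[z]⟦λ⟧` with constant term `1`, and such solutions are unique. For the right-hand side,
substituting `z ↦ z − c` (`c = μ⁻¹`) in the equation of `θ(·; K̃)` gives the logarithmic
derivative `z − c − Σ_{j≥2} (k_j + c^{2j−1}) λ^{2j−2}`, while the square-root factor has
logarithmic derivative `c / (1 − c²λ²) = c + Σ_{j≥2} c^{2j−1} λ^{2j−2}`; in the product the
extra terms cancel.
-/

open Polynomial

/-- `IsThetaFamily K θ` formalizes the generating-function identity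
Σ_{n≥0} θ_n(z;K) λⁿ = exp(zλ − Σ_{j≥2} k_j λ^{2j−1}/(2j−1)) for polynomials
θ_n ∈ ℂ[z]. In characteristic zero, F = exp(S) (with S(0) = 0) is equivalent to
F(0) = 1 together with F' = S'·F; taking coefficients of λⁿ in the latter gives
exactly the recurrence below, since S'(λ) = z − Σ_{j≥2} k_j λ^{2j−2}. -/
def IsThetaFamily (K : ℕ → ℂ) (θ : ℕ → Polynomial ℂ) : Prop :=
  θ 0 = 1 ∧ ∀ n : ℕ, C ((n : ℂ) + 1) * θ (n + 1) =
    X * θ n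
      - ∑ j ∈ Finset.Icc 2 (n + 1),
          if 2 * j ≤ n + 2 then C (K j) * θ (n - (2 * j - 2)) else 0

open scoped PowerSeries

namespace PowerSeries

variable {R S : Type*}

theorem derivative_map [CommSemiring R] [CommSemiring S] (f : R →+* S) (φ : R⟦X⟧) :
    d⁄dX S (map f φ) = map f (d⁄dX R φ) := by
  ext n
  simp [coeff_derivative, coeff_map]

theorem derivative_mul [CommSemiring R] (f g : R⟦X⟧) :
    d⁄dX R (f * g) = f * d⁄dX R g + g * d⁄dX R f :=
  (d⁄dX R).leibniz f g

theorem eq_of_derivative_eq_mul [CommRing R] [IsAddTorsionFree R] {P F H : R⟦X⟧}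
    (hF : d⁄dX R F = P * F) (hH : d⁄dX R H = P * H)
    (h0 : constantCoeff F = constantCoeff H) : F = H := by
  rw [← sub_eq_zero]
  have hD : d⁄dX R (F - H) = P * (F - H) := by rw [map_sub, hF, hH, mul_sub]
  replace h0 : constantCoeff (F - H) = 0 := by rw [map_sub, h0, sub_self]
  generalize F - H = D at hD h0
  ext n
  induction n using Nat.strong_induction_on with
  | _ n ih =>
    cases n with
    | zero => simpa using h0
    | succ n =>
      have hn : coeff (n + 1) D * (n + 1 : ℕ) = 0 := by
        rw [Nat.cast_succ, ← coeff_derivative, hD, coeff_mul]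
        refine Finset.sum_eq_zero fun p hp => ?_
        rw [ih p.2 (Finset.Nat.antidiagonal.snd_lt hp), map_zero, mul_zero]
      rw [← nsmul_eq_mul', smul_eq_zero] at hn
      simpa using hn

theorem coeff_one_sub_C_mul_X_sq_mul [CommRing R] (a : R) (φ : R⟦X⟧) (n : ℕ) :
    coeff n ((1 - C a * X ^ 2) * φ) = coeff n φ - a * if 2 ≤ n then coeff (n - 2) φ else 0 := by
  rw [sub_mul, one_mul, map_sub, mul_assoc, coeff_C_mul, coeff_X_pow_mul']

end PowerSeries

section EvenSeries

variable {R S : Type*}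

/-- `Σ_{j≥2} a_j λ^{2j−2}`; thus `z - evenSeries (C ∘ K)` is the `λ`-derivative of the exponent
`zλ − Σ_{j≥2} k_j λ^{2j−1}/(2j−1)`. -/
noncomputable def evenSeries [Semiring R] (a : ℕ → R) : R⟦X⟧ :=
  PowerSeries.mk fun m => if Even m ∧ 2 ≤ m then a (m / 2 + 1) else 0

theorem evenSeries_add [Semiring R] (a b : ℕ → R) :
    evenSeries (fun j => a j + b j) = evenSeries a + evenSeries b := by
  ext n : 1
  simp only [evenSeries, map_add, PowerSeries.coeff_mk]
  split_ifs <;> simp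

theorem map_evenSeries [Semiring R] [Semiring S] (f : R →+* S) (a : ℕ → R) :
    PowerSeries.map f (evenSeries a) = evenSeries fun j => f (a j) := by
  ext n : 1
  simp only [evenSeries, PowerSeries.coeff_map, PowerSeries.coeff_mk, apply_ite f, map_zero]

theorem coeff_evenSeries_mul [Semiring R] (a θ : ℕ → R) (n : ℕ) :
    PowerSeries.coeff n (evenSeries a * PowerSeries.mk θ) =
      ∑ j ∈ Finset.Icc 2 (n + 1), if 2 * j ≤ n + 2 then a j * θ (n - (2 * j - 2)) else 0 := by
  rw [PowerSeries.coeff_mul, Finset.Nat.sum_antidiagonal_eq_sum_range_succ_mk]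
  simp only [evenSeries, PowerSeries.coeff_mk, ite_mul, zero_mul]
  rw [← Finset.sum_filter, ← Finset.sum_filter]
  refine Finset.sum_nbij' (fun i => i / 2 + 1) (fun j => 2 * j - 2) ?_ ?_ ?_ ?_ fun i hi => ?_
  all_goals simp only [Finset.mem_filter, Finset.mem_range, Finset.mem_Icc, Nat.even_iff] at *
  any_goals omega
  rw [show 2 * (i / 2 + 1) - 2 = i by omega]

variable [CommRing R]

theorem C_add_evenSeries_pow (c : R) :
    PowerSeries.C c + (evenSeries fun j => c ^ (2 * j - 1)) =
      PowerSeries.mk fun m => if Even m then c ^ (m + 1) else 0 := by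
  ext n : 1
  simp only [evenSeries, map_add, PowerSeries.coeff_C, PowerSeries.coeff_mk]
  rcases Nat.even_or_odd' n with ⟨k, rfl | rfl⟩
  · rcases k with _ | k
    · simp
    · simp only [even_two_mul, true_and, le_mul_iff_one_le_right two_pos, le_add_iff_nonneg_left,
        zero_le, if_true]
      rw [if_neg (by omega), zero_add]
      congr 1
      omega
  · simp

theorem one_sub_mul_C_add_evenSeries_pow (c : R) :
    (1 - PowerSeries.C (c ^ 2) * PowerSeries.X ^ 2) *
      (PowerSeries.C c + evenSeries fun j => c ^ (2 * j - 1)) = PowerSeries.C c := by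
  ext n : 1
  simp only [PowerSeries.coeff_one_sub_C_mul_X_sq_mul, C_add_evenSeries_pow, PowerSeries.coeff_mk,
    PowerSeries.coeff_C]
  match n with
  | 0 => simp
  | 1 => simp
  | m + 2 =>
    simp only [Nat.add_sub_cancel, Nat.even_add, even_two, iff_true]
    split_ifs <;> first | contradiction | omega | ring

theorem one_sub_mul_derivative_mk {c : R} {g : ℕ → R} (hg1 : g 1 = c * g 0)
    (hg : ∀ n : ℕ, ((n : R) + 2) * g (n + 2) = c * g (n + 1) + c ^ 2 * n * g n) :
    (1 - PowerSeries.C (c ^ 2) * PowerSeries.X ^ 2) * d⁄dX R (PowerSeries.mk g) =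
      PowerSeries.C c * PowerSeries.mk g := by
  ext n : 1
  rw [PowerSeries.coeff_one_sub_C_mul_X_sq_mul, PowerSeries.coeff_C_mul]
  simp only [PowerSeries.coeff_derivative, PowerSeries.coeff_mk]
  match n with
  | 0 => simp [hg1]
  | 1 =>
    have h0 := hg 0
    norm_num at h0 ⊢
    linear_combination h0
  | m + 2 =>
    have hm := hg (m + 1)
    rw [if_pos le_add_self, Nat.add_sub_cancel]
    push_cast at hm ⊢
    linear_combination hm

/-- The recurrence says `(1 − c²λ²) G' = c G`. -/
theorem derivative_mk_of_artanh_recurrence {c : R} {g : ℕ → R} (hg1 : g 1 = c * g 0)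
    (hg : ∀ n : ℕ, ((n : R) + 2) * g (n + 2) = c * g (n + 1) + c ^ 2 * n * g n) :
    d⁄dX R (PowerSeries.mk g) =
      (PowerSeries.C c + evenSeries fun j => c ^ (2 * j - 1)) * PowerSeries.mk g := by
  have hU : IsUnit (1 - PowerSeries.C (c ^ 2) * PowerSeries.X ^ 2 : R⟦X⟧) := by
    simp [PowerSeries.isUnit_iff_constantCoeff]
  refine hU.mul_left_cancel ?_
  rw [one_sub_mul_derivative_mk hg1 hg, ← mul_assoc, one_sub_mul_C_add_evenSeries_pow]

end EvenSeries

theorem IsThetaFamily.derivative_mk {K : ℕ → ℂ} {θ : ℕ → ℂ[X]} (h : IsThetaFamily K θ) :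
    d⁄dX ℂ[X] (PowerSeries.mk θ) =
      (PowerSeries.C X - evenSeries fun j => C (K j)) * PowerSeries.mk θ := by
  ext n : 1
  rw [PowerSeries.coeff_derivative, sub_mul, map_sub, PowerSeries.coeff_C_mul,
    coeff_evenSeries_mul, PowerSeries.coeff_mk, PowerSeries.coeff_mk, ← h.2, mul_comm, map_add,
    map_natCast, map_one]

theorem IsThetaFamily.derivative_map_compRingHom {K : ℕ → ℂ} {θ : ℕ → ℂ[X]}
    (h : IsThetaFamily K θ) (q : ℂ[X]) :
    d⁄dX ℂ[X] (PowerSeries.map (compRingHom q) (PowerSeries.mk θ)) =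
      (PowerSeries.C q - evenSeries fun j => C (K j)) *
        PowerSeries.map (compRingHom q) (PowerSeries.mk θ) := by
  rw [PowerSeries.derivative_map, h.derivative_mk, map_mul, map_sub, PowerSeries.map_C,
    map_evenSeries]
  simp only [coe_compRingHom_apply, X_comp, C_comp]

theorem theta_shift_general (μ : ℂ) (K : ℕ → ℂ)
    (θ θt : ℕ → Polynomial ℂ) (g : ℕ → ℂ)
    (h : IsThetaFamily K θ)
    (ht : IsThetaFamily (fun j => K j + (μ⁻¹) ^ (2 * j - 1)) θt)
    (hg0 : g 0 = 1) (hg1 : g 1 = μ⁻¹)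
    (hg : ∀ n : ℕ, ((n : ℂ) + 2) * g (n + 2) = μ⁻¹ * g (n + 1) + μ⁻¹ ^ 2 * n * g n) :
    ∀ m : ℕ, θ m = ∑ i ∈ Finset.range (m + 1),
      C (g i) * ((θt (m - i)).comp (X - C μ⁻¹)) := by
  set G := PowerSeries.map C (PowerSeries.mk g)
  set T := PowerSeries.map (compRingHom (X - C μ⁻¹)) (PowerSeries.mk θt)
  have hG : d⁄dX ℂ[X] G =
      (PowerSeries.C (C μ⁻¹) + evenSeries fun j => C (μ⁻¹ ^ (2 * j - 1))) * G := by
    rw [PowerSeries.derivative_map,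
      derivative_mk_of_artanh_recurrence (by rw [hg1, hg0, mul_one]) hg, map_mul, map_add,
      PowerSeries.map_C, map_evenSeries]
  have hT := ht.derivative_map_compRingHom (X - C μ⁻¹)
  have hGT : PowerSeries.mk θ = G * T := by
    refine PowerSeries.eq_of_derivative_eq_mul h.derivative_mk ?_ ?_
    · rw [PowerSeries.derivative_mul, hG, hT]
      simp only [map_add, evenSeries_add, map_sub]
      ring
    · simp only [← PowerSeries.coeff_zero_eq_constantCoeff_apply, G, T, map_mul,
        PowerSeries.coeff_map, PowerSeries.coeff_mk, h.1, ht.1, hg0, map_one, mul_one]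
  intro m
  simpa [PowerSeries.coeff_mul, Finset.Nat.sum_antidiagonal_eq_sum_range_succ_mk, G, T] using
    congrArg (PowerSeries.coeff m) hGT

/-- With K̃_j = k_j + μ^{1−2j}, the generating functions are related by
Σ θ_n(z;K)λⁿ = sqrt((1+μ⁻¹λ)/(1−μ⁻¹λ)) · Σ θ_n(z−μ⁻¹;K̃)λⁿ.
Here g_n are the Taylor coefficients of sqrt((1+cx)/(1−cx)) = exp(artanh(cx)),
c = μ⁻¹, characterized by g₀ = 1, g₁ = c and (1−c²x²)G' = cG, and the identity
is stated as the equality of the n-th coefficients (a Cauchy product). -/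
theorem theta_shift (μ : ℂ) (hμ : μ ≠ 0) (K : ℕ → ℂ)
    (θ θt : ℕ → Polynomial ℂ) (g : ℕ → ℂ)
    (h : IsThetaFamily K θ)
    (ht : IsThetaFamily (fun j => K j + (μ⁻¹) ^ (2 * j - 1)) θt)
    (hg0 : g 0 = 1) (hg1 : g 1 = μ⁻¹)
    (hg : ∀ n : ℕ, ((n : ℂ) + 2) * g (n + 2) = μ⁻¹ * g (n + 1) + μ⁻¹ ^ 2 * n * g n) :
    ∀ m : ℕ, θ m = ∑ i ∈ Finset.range (m + 1),
      C (g i) * ((θt (m - i)).comp (X - C μ⁻¹)) :=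
  theta_shift_general μ K θ θt g h ht hg0 hg1 hg
end

section
/- Let ψ (smooth complex-valued) satisfy −ψ'' + uψ = λψ and ψ_1 satisfy −ψ_1'' + uψ_1 = λ_1ψ_1 on an interval where ψ_1 ≠ 0. Then Φ := W(ψ_1, ψ)/ψ_1 = (ψ_1ψ' − ψ_1'ψ)/ψ_1 satisfies −Φ'' + ũΦ = λΦ, where ũ = u − 2(log ψ_1)'' = u − 2(ψ_1''ψ_1 − (ψ_1')²)/ψ_1². -/
/-- Classical one-step Darboux transformation: if −ψ'' + uψ = λψ and
−ψ₁'' + uψ₁ = λ₁ψ₁ on an open set s where ψ₁ ≠ 0, then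
Φ = W(ψ₁,ψ)/ψ₁ satisfies −Φ'' + ũΦ = λΦ with ũ = u − 2(log ψ₁)''. -/
theorem darboux_transformation (u ψ ψ₁ : ℝ → ℂ) (lam lam₁ : ℂ)
    (s : Set ℝ) (hs : IsOpen s)
    (hψ : ContDiff ℝ (⊤ : ℕ∞) ψ) (hψ₁ : ContDiff ℝ (⊤ : ℕ∞) ψ₁) (hu : ContDiff ℝ (⊤ : ℕ∞) u)
    (hne : ∀ x ∈ s, ψ₁ x ≠ 0)
    (heq : ∀ x ∈ s, -deriv (deriv ψ) x + u x * ψ x = lam * ψ x)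
    (heq₁ : ∀ x ∈ s, -deriv (deriv ψ₁) x + u x * ψ₁ x = lam₁ * ψ₁ x) :
    ∀ x ∈ s,
      -deriv (deriv (fun y => (ψ₁ y * deriv ψ y - deriv ψ₁ y * ψ y) / ψ₁ y)) x
        + (u x - 2 * ((deriv (deriv ψ₁) x * ψ₁ x - (deriv ψ₁ x) ^ 2) / (ψ₁ x) ^ 2))
            * ((ψ₁ x * deriv ψ x - deriv ψ₁ x * ψ x) / ψ₁ x)
      = lam * ((ψ₁ x * deriv ψ x - deriv ψ₁ x * ψ x) / ψ₁ x) := by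
  have hψd : Differentiable ℝ ψ := hψ.differentiable (by simp)
  have hψ₁d : Differentiable ℝ ψ₁ := hψ₁.differentiable (by simp)
  have hψ'd : Differentiable ℝ (deriv ψ) :=
    ((contDiff_infty_iff_deriv.mp (hψ.of_le (by simp))).2).differentiable (by simp)
  have hψ₁'d : Differentiable ℝ (deriv ψ₁) :=
    ((contDiff_infty_iff_deriv.mp (hψ₁.of_le (by simp))).2).differentiable (by simp)
  -- the Wronskian
  set W : ℝ → ℂ := fun y => ψ₁ y * deriv ψ y - deriv ψ₁ y * ψ y with hWdef
  have hWder : ∀ y, HasDerivAt W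
      (deriv ψ₁ y * deriv ψ y + ψ₁ y * deriv (deriv ψ) y
        - (deriv (deriv ψ₁) y * ψ y + deriv ψ₁ y * deriv ψ y)) y := fun y =>
    (((hψ₁d y).hasDerivAt.mul (hψ'd y).hasDerivAt).sub
      ((hψ₁'d y).hasDerivAt.mul (hψd y).hasDerivAt))
  have hW2 : ∀ y ∈ s, deriv W y = (lam₁ - lam) * (ψ₁ y * ψ y) := by
    intro y hy
    have h1 : deriv (deriv ψ) y = (u y - lam) * ψ y := by
      have := heq y hy; linear_combination -this
    have h2 : deriv (deriv ψ₁) y = (u y - lam₁) * ψ₁ y := by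
      have := heq₁ y hy; linear_combination -this
    rw [(hWder y).deriv, h1, h2]; ring
  set g : ℝ → ℂ :=
    fun y => ((lam₁ - lam) * (ψ₁ y * ψ y) * ψ₁ y - W y * deriv ψ₁ y) / (ψ₁ y) ^ 2
    with hgdef
  have hΦg : ∀ y ∈ s, deriv (fun z => W z / ψ₁ z) y = g y := by
    intro y hy
    have hDW : deriv ψ₁ y * deriv ψ y + ψ₁ y * deriv (deriv ψ) y
        - (deriv (deriv ψ₁) y * ψ y + deriv ψ₁ y * deriv ψ y)
        = (lam₁ - lam) * (ψ₁ y * ψ y) := by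
      rw [← (hWder y).deriv]; exact hW2 y hy
    have h := (hWder y).div (hψ₁d y).hasDerivAt (hne y hy)
    rw [hDW] at h
    exact h.deriv
  intro x hx
  have hgoal : (fun y => (ψ₁ y * deriv ψ y - deriv ψ₁ y * ψ y) / ψ₁ y)
      = fun y => W y / ψ₁ y := rfl
  have hev : deriv (fun z => W z / ψ₁ z) =ᶠ[nhds x] g :=
    Filter.eventuallyEq_of_mem (hs.mem_nhds hx) hΦg
  -- derivative of g at x
  have hN : HasDerivAt
      (fun y => (lam₁ - lam) * (ψ₁ y * ψ y) * ψ₁ y - W y * deriv ψ₁ y)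
      (((lam₁ - lam) * (deriv ψ₁ x * ψ x + ψ₁ x * deriv ψ x)) * ψ₁ x
        + (lam₁ - lam) * (ψ₁ x * ψ x) * deriv ψ₁ x
        - ((deriv ψ₁ x * deriv ψ x + ψ₁ x * deriv (deriv ψ) x
            - (deriv (deriv ψ₁) x * ψ x + deriv ψ₁ x * deriv ψ x)) * deriv ψ₁ x
          + W x * deriv (deriv ψ₁) x)) x := by
    exact ((((hψ₁d x).hasDerivAt.mul (hψd x).hasDerivAt).const_mul (lam₁ - lam)).mul
        (hψ₁d x).hasDerivAt).sub ((hWder x).mul (hψ₁'d x).hasDerivAt)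
  have hD : HasDerivAt (fun y => (ψ₁ y) ^ 2) (deriv ψ₁ x * ψ₁ x + ψ₁ x * deriv ψ₁ x) x := by
    have := (hψ₁d x).hasDerivAt.mul (hψ₁d x).hasDerivAt
    rw [show (fun y => (ψ₁ y) ^ 2) = ψ₁ * ψ₁ from funext fun y => by simp [sq]]; exact this
  have hg : deriv g x = _ := (hN.div hD (pow_ne_zero 2 (hne x hx))).deriv
  have h1 : deriv (deriv ψ) x = (u x - lam) * ψ x := by
    have := heq x hx; linear_combination -this
  have h2 : deriv (deriv ψ₁) x = (u x - lam₁) * ψ₁ x := by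
    have := heq₁ x hx; linear_combination -this
  rw [hgoal, hev.deriv_eq, hg, h1, h2, hWdef]
  have hne' := hne x hx
  field_simp
  ring
end
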